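/- Let X be a 2-dimensional simplicial complex with a π₁-injective subcomplex K, and let p : X̃ → X be the universal cover. If the preimage p⁻¹(K) is strongly π₁-injective in X̃, then K is strongly π₁-injective in X. -/

import Mathlib

open scoped Classical
open Geometry

/-- Injectivity (trivial kernel, at every base point) of the inclusion-induced map
`π₁(A) → π₁(B)` for `A ⊆ B`. -/
def PiOneInjIncl {X : Type*} [TopologicalSpace X] {A B : Set X} (hAB : A ⊆ B) : Prop :=
  ∀ (a : A) (γ : Path a a),
    (γ.map (continuous_inclusion hAB)).Homotopic (Path.refl (Set.inclusion hAB a)) →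
    γ.Homotopic (Path.refl a)

variable {E : Type*} [NormedAddCommGroup E] [NormedSpace ℝ E]
variable {F : Type*} [NormedAddCommGroup F] [NormedSpace ℝ F]

/-- `Y` is a subcomplex of `X`. -/
def IsSubcomplexOf {G : Type*} [NormedAddCommGroup G] [NormedSpace ℝ G]
    (Y X : SimplicialComplex ℝ G) : Prop := Y.faces ⊆ X.faces

lemma space_subset_of_subcomplex {G : Type*} [NormedAddCommGroup G] [NormedSpace ℝ G]
    {Y X : SimplicialComplex ℝ G} (h : IsSubcomplexOf Y X) :
    Y.space ⊆ X.space :=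
  Set.biUnion_subset_biUnion_left h

/-- `X` is (at most) 2-dimensional: every face has at most 3 vertices. -/
def IsTwoDimensional (X : SimplicialComplex ℝ E) : Prop := ∀ s ∈ X.faces, s.card ≤ 3

/-- A subset `P` of the ambient space is strongly π₁-injective in the complex `X`: for every
subcomplex `W` of `X`, the inclusion-induced map `π₁(P ∩ W) → π₁(W)` is injective. -/
def SetStronglyPiOneInjectiveIn {G : Type*} [NormedAddCommGroup G] [NormedSpace ℝ G]
    (P : Set G) (X : SimplicialComplex ℝ G) : Prop :=
  ∀ W : SimplicialComplex ℝ G, IsSubcomplexOf W X →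
    PiOneInjIncl (Set.inter_subset_right : P ∩ W.space ⊆ W.space)

/-- `Y` is strongly π₁-injective in `X`. -/
def StronglyPiOneInjectiveIn {G : Type*} [NormedAddCommGroup G] [NormedSpace ℝ G]
    (Y X : SimplicialComplex ℝ G) : Prop :=
  SetStronglyPiOneInjectiveIn Y.space X

/-!
A loop in `K ∩ Z` that is null-homotopic in `Z` lifts, together with its null-homotopy, through
the covering `p⁻¹(Z) → Z`. Since the homotopy fixes the endpoints, the lift is again a loop; it lies
in `p⁻¹(K) ∩ p⁻¹(Z)` and is null-homotopic in `p⁻¹(Z)`, which is a subcomplex of the cover. Strong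
π₁-injectivity of `p⁻¹(K)` contracts it inside `p⁻¹(K) ∩ p⁻¹(Z)`, and pushing this contraction
down by `p` contracts the original loop inside `K ∩ Z`.
-/

open Set Topology unitInterval

section ReflectsNullHomotopy

open ContinuousMap

variable {A B A' B' Y Y' : Type*} [TopologicalSpace A] [TopologicalSpace B]
  [TopologicalSpace A'] [TopologicalSpace B'] [TopologicalSpace Y] [TopologicalSpace Y']

/-- Stated for free paths rather than for `Path a a`, so that it can be transported along maps
without casting endpoints. -/
def ContinuousMap.ReflectsNullHomotopy (f : C(A, B)) : Prop :=
  ∀ γ : C(I, A), (f.comp γ).HomotopicRel (.const I (f (γ 0))) {0, 1} →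
    γ.HomotopicRel (.const I (γ 0)) {0, 1}

theorem piOneInjIncl_iff_reflectsNullHomotopy {S T : Set Y} (h : S ⊆ T) :
    PiOneInjIncl h ↔ (ContinuousMap.inclusion h).ReflectsNullHomotopy := by
  refine ⟨fun hinj γ hγ => ?_, fun hrefl a γ => ?_⟩
  · have hloop : γ 1 = γ 0 := Set.inclusion_injective h (hγ.fst_eq_snd (.inr rfl))
    exact hinj (γ 0) ⟨γ, rfl, hloop⟩ hγ
  · have := hrefl γ.toContinuousMap
    rw [show γ.toContinuousMap 0 = a from γ.source] at this
    exact this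

theorem ContinuousMap.ReflectsNullHomotopy.of_retract {i : C(A, B)} {i' : C(A', B')}
    (hi' : i'.ReflectsNullHomotopy) (f : C(A, A')) (g : C(B, B')) (r : C(A', A))
    (hrf : r.comp f = .id A) (hcomm : i'.comp f = g.comp i) : i.ReflectsNullHomotopy := by
  intro γ hγ
  have hcomm₀ : i' (f (γ 0)) = g (i (γ 0)) := DFunLike.congr_fun hcomm (γ 0)
  have hrf₀ : r (f (γ 0)) = γ 0 := DFunLike.congr_fun hrf (γ 0)
  have hγ' : (i'.comp (f.comp γ)).HomotopicRel (.const I (i' (f (γ 0)))) {0, 1} := by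
    rw [hcomm₀, ← comp_assoc, hcomm, comp_assoc, ← comp_const]
    exact hγ.comp_continuousMap g
  have := (hi' _ hγ').comp_continuousMap r
  rwa [← comp_assoc, hrf, id_comp, comp_const, comp_apply, hrf₀] at this

theorem ContinuousMap.reflectsNullHomotopy_congr {i : C(A, B)} {i' : C(A', B')}
    (φ : A ≃ₜ A') (ψ : B ≃ₜ B') (hcomm : ∀ a, i' (φ a) = ψ (i a)) :
    i.ReflectsNullHomotopy ↔ i'.ReflectsNullHomotopy := by
  refine ⟨fun h => h.of_retract φ.symm ψ.symm φ (ext φ.apply_symm_apply) (ext fun a' => ?_),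
    fun h => h.of_retract φ ψ φ.symm (ext φ.symm_apply_apply) (ext hcomm)⟩
  simpa using (ψ.symm_apply_eq.mpr (hcomm (φ.symm a'))).symm

theorem piOneInjIncl_congr {S S' T T' : Set Y}
    (hS : S = S') (hT : T = T') (h : S ⊆ T) (h' : S' ⊆ T') :
    PiOneInjIncl h ↔ PiOneInjIncl h' := by
  subst hS hT
  rfl

theorem piOneInjIncl_image_iff {j : Y → Y'} (hj : IsEmbedding j) {S T : Set Y} (h : S ⊆ T) :
    PiOneInjIncl (image_mono h : j '' S ⊆ j '' T) ↔ PiOneInjIncl h := by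
  rw [piOneInjIncl_iff_reflectsNullHomotopy, piOneInjIncl_iff_reflectsNullHomotopy]
  exact (reflectsNullHomotopy_congr (hj.homeomorphImage S) (hj.homeomorphImage T)
    fun _ => rfl).symm

end ReflectsNullHomotopy

namespace IsCoveringMap

variable {E' B : Type*} [TopologicalSpace E'] [TopologicalSpace B] {p : E' → B}

theorem isClosed_range (cov : IsCoveringMap p) : IsClosed (range p) := by
  refine isOpen_compl_iff.mp (isOpen_iff_forall_mem_open.mpr fun x hx => ?_)
  obtain ⟨-, U, hxU, hU, -, H, -⟩ := cov x
  refine ⟨U, ?_, hU, hxU⟩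
  rintro _ hy ⟨e, rfl⟩
  exact hx ⟨_, (H ⟨e, hy⟩).2.2⟩

theorem surjective [PreconnectedSpace B] [Nonempty E'] (cov : IsCoveringMap p) :
    Function.Surjective p :=
  range_eq_univ.mp (IsClopen.eq_univ ⟨cov.isClosed_range, cov.isOpenMap.isOpen_range⟩
    (range_nonempty p))

theorem piOneInjIncl_of_preimage (cov : IsCoveringMap p) {S T : Set B} (hST : S ⊆ T)
    (hS : S ⊆ range p) (h : PiOneInjIncl (preimage_mono hST : p ⁻¹' S ⊆ p ⁻¹' T)) :
    PiOneInjIncl hST := by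
  rw [piOneInjIncl_iff_reflectsNullHomotopy] at h ⊢
  intro γ hγ
  have covT := cov.restrictPreimage T
  obtain ⟨e, he⟩ := hS (γ 0).2
  let e' : p ⁻¹' T := ⟨e, show p e ∈ T from he ▸ hST (γ 0).2⟩
  have h₀ : (ContinuousMap.inclusion hST).comp γ 0 = T.restrictPreimage p e' :=
    Subtype.ext he.symm
  let Γ := covT.liftPath _ e' h₀
  have hΓ : Γ.HomotopicRel (.const I e') {0, 1} := by
    simpa only [covT.liftPath_const] using covT.homotopicRel_liftPath hγ e' h₀ h₀
  have hΓ_lifts : ∀ t, p (Γ t) = γ t := fun t =>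
    congrArg Subtype.val (congr_fun (covT.liftPath_lifts _ e' h₀) t)
  let ΓS : C(I, p ⁻¹' S) := ⟨fun t => ⟨Γ t, show p (Γ t) ∈ S from (hΓ_lifts t).symm ▸ (γ t).2⟩,
    by fun_prop⟩
  have hΓS : ΓS.HomotopicRel (.const I (ΓS 0)) {0, 1} := h ΓS <| by
    change Γ.HomotopicRel (.const I (Γ 0)) {0, 1}
    rwa [covT.liftPath_zero]
  let pS : C(p ⁻¹' S, S) := ⟨S.restrictPreimage p, cov.continuous.restrictPreimage⟩
  have hpΓS : pS.comp ΓS = γ := ContinuousMap.ext fun t => Subtype.ext (hΓ_lifts t)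
  have := hΓS.comp_continuousMap pS
  rwa [ContinuousMap.comp_const, ← ContinuousMap.comp_apply, hpΓS] at this

end IsCoveringMap

theorem strongly_piOne_injective_of_preimage_in_universal_cover_general
    (X : SimplicialComplex ℝ E)
    (hconn : ConnectedSpace X.space)
    (X' : SimplicialComplex ℝ F) (p : X'.space → X.space)
    (hcov : IsCoveringMap p) (huniv : SimplyConnectedSpace X'.space)
    (hsimplicial : ∀ Z : SimplicialComplex ℝ E, IsSubcomplexOf Z X →
      ∃ W : SimplicialComplex ℝ F, IsSubcomplexOf W X' ∧
        Subtype.val '' (p ⁻¹' {x : X.space | (x : E) ∈ Z.space}) = W.space)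
    (K : SimplicialComplex ℝ E)
    (hpre : SetStronglyPiOneInjectiveIn
      (Subtype.val '' (p ⁻¹' {x : X.space | (x : E) ∈ K.space})) X') :
    StronglyPiOneInjectiveIn K X := by
  intro Z hZ
  let S : Set X.space := Subtype.val ⁻¹' K.space
  let T : Set X.space := Subtype.val ⁻¹' Z.space
  obtain ⟨W, hW, hWT⟩ := hsimplicial Z hZ
  have hup : PiOneInjIncl (preimage_mono inter_subset_right : p ⁻¹' (S ∩ T) ⊆ p ⁻¹' T) := by
    refine (piOneInjIncl_image_iff .subtypeVal _).mp
      ((piOneInjIncl_congr ?_ hWT.symm _ _).mp (hpre W hW))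
    rw [← hWT, ← image_inter Subtype.val_injective]
    rfl
  have hdown := hcov.piOneInjIncl_of_preimage inter_subset_right
    (fun x _ => hcov.surjective x) hup
  have hZX : Z.space ⊆ X.space := space_subset_of_subcomplex hZ
  refine (piOneInjIncl_congr ?_ ?_ _ _).mp ((piOneInjIncl_image_iff .subtypeVal _).mpr hdown)
  · rw [← preimage_inter, Subtype.image_preimage_coe, inter_eq_right]
    exact inter_subset_right.trans hZX
  · rw [Subtype.image_preimage_coe, inter_eq_right.mpr hZX]

/-- Let `X` be a 2-dimensional simplicial complex with a π₁-injective
subcomplex `K`, and let `p : X̃ → X` be the universal cover (`X̃` a simplicial complex whose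
space is simply connected, `p` a covering map under which the preimage of any subcomplex of
`X` is a subcomplex of `X̃`). If the preimage `p⁻¹(K)` is strongly π₁-injective in `X̃`, then
`K` is strongly π₁-injective in `X`. -/
theorem strongly_piOne_injective_of_preimage_in_universal_cover
    (X : SimplicialComplex ℝ E)
    (hdim : IsTwoDimensional X) (hconn : ConnectedSpace X.space)
    (X' : SimplicialComplex ℝ F) (p : X'.space → X.space)
    (hcov : IsCoveringMap p) (huniv : SimplyConnectedSpace X'.space)
    (hsimplicial : ∀ Z : SimplicialComplex ℝ E, IsSubcomplexOf Z X →
      ∃ W : SimplicialComplex ℝ F, IsSubcomplexOf W X' ∧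
        Subtype.val '' (p ⁻¹' {x : X.space | (x : E) ∈ Z.space}) = W.space)
    (K : SimplicialComplex ℝ E) (hK : IsSubcomplexOf K X)
    (hKinj : PiOneInjIncl (space_subset_of_subcomplex hK))
    (hpre : SetStronglyPiOneInjectiveIn
      (Subtype.val '' (p ⁻¹' {x : X.space | (x : E) ∈ K.space})) X') :
    StronglyPiOneInjectiveIn K X :=
  strongly_piOne_injective_of_preimage_in_universal_cover_general X hconn X' p hcov huniv
    hsimplicial K hpre
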